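/- arXiv:2206.13612 — 2 statements merged into one kernel-verified Lean document; each statement's English description precedes it below -/
import Mathlib

section
/- If v_1, ..., v_d are linearly independent vectors in ℝ^d and S = {v_j + v_k : 1 ≤ j ≤ k ≤ d}, then the only real symmetric d×d matrix A satisfying xᵀAx = 0 for all x ∈ S is the zero matrix. -/
/-!
Polarization: for a symmetric form `B`, `B (vⱼ + vⱼ) (vⱼ + vⱼ) = 4 B vⱼ vⱼ` kills the diagonal, and
then `B (vⱼ + vₖ) (vⱼ + vₖ) = 2 B vⱼ vₖ` kills every off-diagonal entry. A bilinear form vanishing on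
all pairs of basis vectors is zero, and `xᵀ A y` is such a form for the basis `v`.
-/

namespace LinearMap

variable {R M N ι : Type*} [CommSemiring R] [AddCommMonoid M] [Module R M]
  [AddCommGroup N] [IsAddTorsionFree N] [Module R N] [LinearOrder ι]
  {B : M →ₗ[R] M →ₗ[R] N}

theorem apply_eq_zero_of_forall_le_apply_add_add (hB : ∀ x y, B x y = B y x) {v : ι → M}
    (h : ∀ j k, j ≤ k → B (v j + v k) (v j + v k) = 0) (j k : ι) : B (v j) (v k) = 0 := by
  have expand : ∀ j k,
      B (v j + v k) (v j + v k) = B (v j) (v j) + 2 • B (v j) (v k) + B (v k) (v k) := by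
    intro j k
    simp only [map_add, add_apply, hB (v k) (v j)]
    abel
  have diag : ∀ j, B (v j) (v j) = 0 := fun j => by
    have : 4 • B (v j) (v j) = 0 := by
      rw [← h j j le_rfl, expand]
      abel
    exact (smul_eq_zero_iff_right four_ne_zero).mp this
  wlog hjk : j ≤ k generalizing j k
  · rw [hB]
    exact this k j (le_of_not_ge hjk)
  have := h j k hjk
  rw [expand, diag, diag, zero_add, add_zero] at this
  exact (smul_eq_zero_iff_right two_ne_zero).mp this

theorem eq_zero_of_forall_le_apply_add_add (b : Module.Basis ι R M) (hB : ∀ x y, B x y = B y x)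
    (h : ∀ j k, j ≤ k → B (b j + b k) (b j + b k) = 0) : B = 0 :=
  ext_basis b b fun j k => apply_eq_zero_of_forall_le_apply_add_add hB h j k

end LinearMap

/-- If `v 1, …, v d` are linearly independent vectors in `ℝ^d` and
`S = {v j + v k : j ≤ k}`, then the only real symmetric `d × d` matrix `A`
with `xᵀ A x = 0` for all `x ∈ S` is the zero matrix. -/
theorem sm_uniqueness_of_linearIndependent {d : ℕ}
    (v : Fin d → (Fin d → ℝ)) (hv : LinearIndependent ℝ v)
    (A : Matrix (Fin d) (Fin d) ℝ) (hA : A.IsSymm)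
    (h : ∀ j k : Fin d, j ≤ k →
      dotProduct (v j + v k) (A.mulVec (v j + v k)) = 0) :
    A = 0 := by
  let b := basisOfLinearIndependentOfCardEqFinrank' v hv (by simp)
  have hB : A.toBilin' = 0 :=
    LinearMap.eq_zero_of_forall_le_apply_add_add b (Matrix.isSymm_toBilin'_iff_isSymm.mpr hA).eq
      fun j k hjk => by simpa [b, Matrix.toBilin'_apply'] using h j k hjk
  exact Matrix.toBilin'.map_eq_zero_iff.mp hB
end

section
/- Let P, Q be elliptical distributions on ℝ^d with characteristic functions φ_P(ξ) = e^{iμ₁·ξ} ψ₁(ξᵀΣ₁ξ) and φ_Q(ξ) = e^{iμ₂·ξ} ψ₂(ξᵀΣ₂ξ). If the projections of P and Q onto the line spanned by x agree for every x in some spanning set of ℝ^d, then μ₁ = μ₂. -/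
open MeasureTheory

/-- The characteristic function of a measure on `ℝ^d`. -/
noncomputable def cf {d : ℕ} (P : Measure (EuclideanSpace ℝ (Fin d)))
    (ξ : EuclideanSpace ℝ (Fin d)) : ℂ :=
  ∫ x, Complex.exp (((inner ℝ x ξ : ℝ) : ℂ) * Complex.I) ∂P

/-- The quadratic form `ξᵀ M ξ`. -/
noncomputable def qf {d : ℕ} (M : Matrix (Fin d) (Fin d) ℝ)
    (ξ : EuclideanSpace ℝ (Fin d)) : ℝ :=
  dotProduct (fun i => ξ i) (M.mulVec (fun i => ξ i))

/-- `P` is an elliptical distribution with location `μ`, scatter matrix `Sig`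
and generator `ψ`. -/
def IsElliptical {d : ℕ} (P : Measure (EuclideanSpace ℝ (Fin d)))
    (μ : EuclideanSpace ℝ (Fin d)) (Sig : Matrix (Fin d) (Fin d) ℝ) (ψ : ℝ → ℂ) : Prop :=
  IsProbabilityMeasure P ∧ Sig.PosSemidef ∧ ContinuousOn ψ (Set.Ici 0) ∧
    ∀ ξ, cf P ξ = Complex.exp (((inner ℝ μ ξ : ℝ) : ℂ) * Complex.I) * ψ (qf Sig ξ)

/-- The projection of `P` onto the line spanned by `x`: the pushforward of `P`
under the orthogonal projection onto `span {x}`. -/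
noncomputable def projLine {d : ℕ} (P : Measure (EuclideanSpace ℝ (Fin d)))
    (x : EuclideanSpace ℝ (Fin d)) :
    Measure (Submodule.span ℝ ({x} : Set (EuclideanSpace ℝ (Fin d)))) :=
  P.map (Submodule.orthogonalProjectionOnto (Submodule.span ℝ {x}))

/-!
Along the line through `x`, the characteristic function of an elliptical distribution is
`t ↦ exp (i t ⟪μ, x⟫) g t` with `g t = ψ (t² xᵀΣx)` even and `g 0 = 1`, and it only depends on the
projection onto `⟨x⟩`. Dividing the values at `t` and `-t` where `g ≠ 0` gives
`exp (2 i t (⟪μ₁, x⟫ - ⟪μ₂, x⟫)) = 1` for all small `t`, so `⟪μ₁, x⟫ = ⟪μ₂, x⟫`; a spanning set of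
such `x` separates `μ₁` from `μ₂`.
-/

open Filter Topology Complex

lemma eq_zero_of_eventually_exp_mul_I_eq_one {c : ℝ}
    (h : ∀ᶠ t : ℝ in 𝓝 0, exp (↑(t * c) * I) = 1) : c = 0 := by
  have hderiv : HasDerivAt (fun t : ℝ => exp (↑(t * c) * I)) (c * I) 0 := by
    simpa using (((hasDerivAt_id (0 : ℝ)).mul_const c).ofReal_comp.mul_const I).cexp
  have hconst : HasDerivAt (fun t : ℝ => exp (↑(t * c) * I)) 0 0 :=
    (hasDerivAt_const (0 : ℝ) (1 : ℂ)).congr_of_eventuallyEq h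
  simpa using hderiv.unique hconst

lemma eq_of_exp_mul_I_mul_even_eq {a b : ℝ} {g₁ g₂ : ℝ → ℂ}
    (heq : ∀ t : ℝ, exp (↑(t * a) * I) * g₁ t = exp (↑(t * b) * I) * g₂ t)
    (heven₁ : ∀ t, g₁ (-t) = g₁ t) (heven₂ : ∀ t, g₂ (-t) = g₂ t)
    (hne : ∀ᶠ t in 𝓝 0, g₁ t ≠ 0) : a = b := by
  have h2 : 2 * (a - b) = 0 := by
    refine eq_zero_of_eventually_exp_mul_I_eq_one ?_
    filter_upwards [hne] with t ht
    have hneg := heq (-t)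
    rw [heven₁, heven₂] at hneg
    have key : exp (↑(t * a) * I) * exp (↑(-t * b) * I) * g₁ t
        = exp (↑(-t * a) * I) * exp (↑(t * b) * I) * g₁ t := by
      calc _ = exp (↑(-t * b) * I) * (exp (↑(t * a) * I) * g₁ t) := by ring
        _ = exp (↑(-t * b) * I) * exp (↑(t * b) * I) * g₂ t := by rw [heq t]; ring
        _ = exp (↑(t * b) * I) * (exp (↑(-t * b) * I) * g₂ t) := by ring
        _ = _ := by rw [← hneg]; ring
    rw [← exp_add, ← exp_add] at key
    rw [show (↑(t * (2 * (a - b))) * I : ℂ)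
        = (↑(t * a) * I + ↑(-t * b) * I) - (↑(-t * a) * I + ↑(t * b) * I) by push_cast; ring,
      exp_sub, mul_right_cancel₀ ht key, div_self (exp_ne_zero _)]
  linarith

section Elliptical

variable {d : ℕ}

lemma qf_smul (M : Matrix (Fin d) (Fin d) ℝ) (t : ℝ) (x : EuclideanSpace ℝ (Fin d)) :
    qf M (t • x) = t ^ 2 * qf M x := by
  change dotProduct (t • fun i => x i) (M.mulVec (t • fun i => x i)) = _
  rw [Matrix.mulVec_smul, dotProduct_smul, smul_dotProduct, smul_smul, smul_eq_mul, sq, qf]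

lemma qf_nonneg {M : Matrix (Fin d) (Fin d) ℝ} (hM : M.PosSemidef) (x : EuclideanSpace ℝ (Fin d)) :
    0 ≤ qf M x :=
  hM.dotProduct_mulVec_nonneg _

lemma cf_zero (P : Measure (EuclideanSpace ℝ (Fin d))) [IsProbabilityMeasure P] : cf P 0 = 1 := by
  simp [cf]

lemma cf_eq_integral_projLine (P : Measure (EuclideanSpace ℝ (Fin d)))
    {x ξ : EuclideanSpace ℝ (Fin d)} (hξ : ξ ∈ Submodule.span ℝ {x}) :
    cf P ξ = ∫ z, exp (↑(inner ℝ (z : EuclideanSpace ℝ (Fin d)) ξ) * I) ∂(projLine P x) := by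
  rw [cf, projLine, integral_map (by fun_prop) (by fun_prop)]
  refine integral_congr_ae (.of_forall fun y => ?_)
  dsimp only
  rw [← Submodule.coe_mk ξ hξ, ← Submodule.coe_inner,
    Submodule.inner_orthogonalProjectionOnto_eq_of_mem_right]

lemma cf_eq_of_projLine_eq {P Q : Measure (EuclideanSpace ℝ (Fin d))}
    {x ξ : EuclideanSpace ℝ (Fin d)} (h : projLine P x = projLine Q x)
    (hξ : ξ ∈ Submodule.span ℝ {x}) : cf P ξ = cf Q ξ := by
  rw [cf_eq_integral_projLine P hξ, cf_eq_integral_projLine Q hξ, h]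

namespace IsElliptical

variable {P : Measure (EuclideanSpace ℝ (Fin d))} {μ : EuclideanSpace ℝ (Fin d)}
  {Sig : Matrix (Fin d) (Fin d) ℝ} {ψ : ℝ → ℂ}

lemma generator_zero (hP : IsElliptical P μ Sig ψ) : ψ 0 = 1 := by
  have := hP.1
  simpa [cf_zero, qf] using (hP.2.2.2 0).symm

lemma cf_smul (hP : IsElliptical P μ Sig ψ) (t : ℝ) (x : EuclideanSpace ℝ (Fin d)) :
    cf P (t • x) = exp (↑(t * inner ℝ μ x) * I) * ψ (t ^ 2 * qf Sig x) := by
  rw [hP.2.2.2, real_inner_smul_right, qf_smul]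

lemma eventually_generator_ne_zero (hP : IsElliptical P μ Sig ψ) (x : EuclideanSpace ℝ (Fin d)) :
    ∀ᶠ t : ℝ in 𝓝 0, ψ (t ^ 2 * qf Sig x) ≠ 0 := by
  have hquad : Tendsto (fun t : ℝ => t ^ 2 * qf Sig x) (𝓝 0) (𝓝[Set.Ici 0] 0) :=
    tendsto_nhdsWithin_of_tendsto_nhds_of_eventually_within _
      ((by fun_prop : Continuous fun t : ℝ => t ^ 2 * qf Sig x).tendsto' 0 0 (by simp))
      (Eventually.of_forall fun t => mul_nonneg (sq_nonneg t) (qf_nonneg hP.2.1 x))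
  have hψ := (hP.2.2.1 0 Set.self_mem_Ici).tendsto.comp hquad
  rw [hP.generator_zero] at hψ
  exact hψ.eventually_ne one_ne_zero

end IsElliptical

lemma inner_eq_of_projLine_eq {P Q : Measure (EuclideanSpace ℝ (Fin d))}
    {μ₁ μ₂ : EuclideanSpace ℝ (Fin d)} {Sig₁ Sig₂ : Matrix (Fin d) (Fin d) ℝ} {ψ₁ ψ₂ : ℝ → ℂ}
    (hP : IsElliptical P μ₁ Sig₁ ψ₁) (hQ : IsElliptical Q μ₂ Sig₂ ψ₂)
    {x : EuclideanSpace ℝ (Fin d)} (h : projLine P x = projLine Q x) :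
    inner ℝ μ₁ x = inner ℝ μ₂ x :=
  eq_of_exp_mul_I_mul_even_eq
    (fun t => by
      rw [← hP.cf_smul, ← hQ.cf_smul]
      exact cf_eq_of_projLine_eq h (Submodule.smul_mem _ t (Submodule.mem_span_singleton_self x)))
    (fun t => by rw [neg_sq]) (fun t => by rw [neg_sq]) (hP.eventually_generator_ne_zero x)

end Elliptical

/-- If two elliptical distributions have equal projections along every line
spanned by a vector of a spanning set, then their location vectors coincide. -/
theorem loc_eq_of_proj_eq {d : ℕ}
    (P Q : Measure (EuclideanSpace ℝ (Fin d)))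
    (μ₁ μ₂ : EuclideanSpace ℝ (Fin d)) (Sig₁ Sig₂ : Matrix (Fin d) (Fin d) ℝ)
    (ψ₁ ψ₂ : ℝ → ℂ)
    (hP : IsElliptical P μ₁ Sig₁ ψ₁) (hQ : IsElliptical Q μ₂ Sig₂ ψ₂)
    (S : Set (EuclideanSpace ℝ (Fin d))) (hspan : Submodule.span ℝ S = ⊤)
    (hproj : ∀ x ∈ S, projLine P x = projLine Q x) :
    μ₁ = μ₂ := by
  have hinner : innerₛₗ ℝ μ₁ = innerₛₗ ℝ μ₂ :=
    LinearMap.ext_on hspan fun x hx => inner_eq_of_projLine_eq hP hQ (hproj x hx)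
  exact ext_inner_right ℝ fun v => congrArg (· v) hinner
end
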